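/- arXiv:1902.07803 — 2 statements merged into one kernel-verified Lean document; each statement's English description precedes it below -/
import Mathlib

section
/- Let γ : G → G' be a contraction of graphs and (P,s) a spin structure on G. Set P' = γ_*P and define s' : V(G'/P') → ℤ/2ℤ by s'(v') = Σ_{v ∈ γ̄⁻¹(v')} s(v), where γ̄ : G/P → G'/P' is the induced contraction. Then (P',s') is a spin structure on G' (in particular s' vanishes on every weight-0 vertex of G'/P'), and (P',s') has the same parity as (P,s). -/
/-!
Common combinatorial preliminaries: weighted graphs with legs, contractions,
spin structures, following Caporaso–Melo–Pacini, "Tropicalizing the moduli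
space of spin curves".
-/

attribute [local instance] Classical.propDecidable

noncomputable section

/-- A weighted graph with legs.  Edges are recorded as elements of a finite
type `E` together with their (unordered) pair of endpoints `ends e : Sym2 V`
(a loop corresponds to a diagonal pair); legs are elements of a finite type
`Lg` with an endpoint map `legEnd`; `w` is the weight function. -/
structure LGraph : Type 1 where
  V : Type
  E : Type
  Lg : Type
  fV : Fintype V
  fE : Fintype E
  fL : Fintype Lg
  dV : DecidableEq V
  dE : DecidableEq E
  dL : DecidableEq Lg
  neV : Nonempty V
  ends : E → Sym2 V
  legEnd : Lg → V
  w : V → ℕ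

attribute [instance] LGraph.fV LGraph.fE LGraph.fL LGraph.dV LGraph.dE LGraph.dL LGraph.neV

namespace LGraph

variable (G : LGraph)

/-- The multiplicity of the vertex `v` in the edge `e` (`2` for a loop at `v`). -/
def degMul (v : G.V) (e : G.E) : ℕ :=
  Sym2.lift ⟨fun a b => (if a = v then 1 else 0) + (if b = v then 1 else 0),
    fun _ _ => add_comm _ _⟩ (G.ends e)

/-- The degree of a vertex: number of non-leg half-edges ending at it. -/
def deg (v : G.V) : ℕ := ∑ e, G.degMul v e

/-- The number of legs ending at a vertex. -/
def legsAt (v : G.V) : ℕ := (Finset.univ.filter fun l => G.legEnd l = v).card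

/-- The number of loops based at a vertex. -/
def loops (v : G.V) : ℕ := (Finset.univ.filter fun e => G.ends e = Sym2.diag v).card

/-- The boundary map `∂ : E_G → V_G` over `F₂`, sending an edge to the sum of
its two endpoints. -/
def boundary : (G.E → ZMod 2) →ₗ[ZMod 2] (G.V → ZMod 2) where
  toFun x := fun v => ∑ e, x e * (G.degMul v e : ZMod 2)
  map_add' x y := by
    funext v
    simp [add_mul, Finset.sum_add_distrib]
  map_smul' c x := by
    funext v
    simp [Finset.mul_sum, mul_assoc]

/-- The `F₂`-indicator vector of a set of edges. -/
def indicator (P : Finset G.E) : G.E → ZMod 2 := fun e => if e ∈ P then 1 else 0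

/-- A subset of edges is cyclic if it lies in the cycle space `C_G = ker ∂`,
i.e. its indicator vector is killed by the boundary map. -/
def IsCyclic (P : Finset G.E) : Prop := G.boundary (G.indicator P) = 0

/-- Adjacency through an edge belonging to `P`. -/
def PAdj (P : Finset G.E) (u v : G.V) : Prop :=
  ∃ e ∈ P, u ∈ G.ends e ∧ v ∈ G.ends e

/-- The vertex set of the contraction `G/P`: connected components of `(V, P)`. -/
def CompV (P : Finset G.E) : Type := Quot (G.PAdj P)

instance (P : Finset G.E) : Finite (G.CompV P) := Quot.finite _
instance (P : Finset G.E) : Fintype (G.CompV P) := Fintype.ofFinite _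
instance (P : Finset G.E) : Nonempty (G.CompV P) := G.neV.map (Quot.mk _)

/-- The set of vertices of `G` lying in a given component. -/
def fiberV (P : Finset G.E) (x : G.CompV P) : Finset G.V :=
  Finset.univ.filter fun v => Quot.mk (G.PAdj P) v = x

/-- The set of edges of `P` lying in a given component. -/
def fiberE (P : Finset G.E) (x : G.CompV P) : Finset G.E :=
  P.filter fun e => ∀ v ∈ G.ends e, Quot.mk (G.PAdj P) v = x

/-- The weight of a vertex `x` of `G/P`: the genus of its preimage, i.e. the
sum of the weights of the vertices in the component plus its first Betti
number `#edges - #vertices + 1`. -/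
def quotWeight (P : Finset G.E) (x : G.CompV P) : ℕ :=
  (∑ v ∈ G.fiberV P x, G.w v) + ((G.fiberE P x).card + 1 - (G.fiberV P x).card)

/-- Connectedness of the graph. -/
def Connected : Prop := ∀ u v : G.V, Relation.EqvGen (G.PAdj Finset.univ) u v

/-- The number of connected components `c(G)`. -/
def numComp : ℕ := Nat.card (G.CompV Finset.univ)

/-- The first Betti number `b₁(G) = |E| - |V| + c(G)`. -/
def b1 : ℕ := Fintype.card G.E + G.numComp - Fintype.card G.V

/-- The genus `g(G) = Σ_v w(v) + b₁(G)`. -/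
def genus : ℕ := (∑ v, G.w v) + G.b1

/-- The number of legs. -/
def numLegs : ℕ := Fintype.card G.Lg

/-- Stability: connected and `2w(v) - 2 + deg(v) + ℓ(v) > 0` at every vertex. -/
def Stable : Prop :=
  G.Connected ∧ ∀ v : G.V, 2 < 2 * G.w v + G.deg v + G.legsAt v

/-- `G` is Eulerian (cyclic) if every vertex has even degree, i.e. the set of
all edges lies in the cycle space. -/
def Eulerian : Prop := G.IsCyclic Finset.univ

/-- A basic graph: a stable cyclic (Eulerian) graph of genus `≥ 2` with at
least one edge, all weights `≤ 1`, and `w(v) + deg(v) + ℓ(v) ≤ 4` at every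
vertex with equality only if there is a loop at `v`. -/
def IsBasic : Prop :=
  G.Stable ∧ 2 ≤ G.genus ∧ Nonempty G.E ∧ G.Eulerian ∧
  (∀ v, G.w v ≤ 1) ∧
  (∀ v, G.w v + G.deg v + G.legsAt v ≤ 4) ∧
  (∀ v, G.w v + G.deg v + G.legsAt v = 4 → 1 ≤ G.loops v)

/-- `c⁺`: the number of vertices of `G/P` of positive weight, i.e. the number
of connected components of `P̄` of positive genus. -/
def cPlus (P : Finset G.E) : ℕ :=
  (Finset.univ.filter fun x : G.CompV P => 0 < G.quotWeight P x).card

/-- The contracted graph `G/P`. -/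
def contract (P : Finset G.E) : LGraph where
  V := G.CompV P
  E := {e : G.E // e ∉ P}
  Lg := G.Lg
  fV := inferInstance
  fE := inferInstance
  fL := G.fL
  dV := Classical.decEq _
  dE := inferInstance
  dL := G.dL
  neV := inferInstance
  ends := fun e => (G.ends e.1).map (Quot.mk (G.PAdj P))
  legEnd := fun l => Quot.mk (G.PAdj P) (G.legEnd l)
  w := G.quotWeight P

/-- An ordered pair of endpoints of an edge. -/
def endPair (e : G.E) : G.V × G.V := Classical.choose (Quot.exists_rep (G.ends e))

end LGraph

/-- A spin structure on a graph `G`: a cyclic subset `P` of edges and a sign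
function on the vertices of `G/P` vanishing at all vertices of weight `0`. -/
structure SpinStructure (G : LGraph) where
  P : Finset G.E
  cyclic : G.IsCyclic P
  s : G.CompV P → ZMod 2
  vanish : ∀ x, G.quotWeight P x = 0 → s x = 0

/-- The parity of a spin structure: the parity of `Σ_{v ∈ V(G/P)} s(v)`. -/
def SpinStructure.parity {G : LGraph} (σ : SpinStructure G) : ZMod 2 := ∑ x, σ.s x

/-- A contraction of graphs `γ : G → G' = G/F`: the edges of `G'` are
identified with `E(G) ∖ F`, the legs of `G'` with those of `G`; the vertex
map is surjective, its fibers are exactly the connected components of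
`(V(G), F)`, endpoints and legs are compatible, and the weight of a vertex of
`G'` is the genus of its preimage. -/
structure Contraction (G G' : LGraph) where
  F : Finset G.E
  vMap : G.V → G'.V
  eEquiv : G'.E ≃ {e : G.E // e ∉ F}
  lEquiv : G'.Lg ≃ G.Lg
  vSurj : Function.Surjective vMap
  ends_compat : ∀ e' : G'.E, G'.ends e' = (G.ends (eEquiv e').1).map vMap
  leg_compat : ∀ l' : G'.Lg, G'.legEnd l' = vMap (G.legEnd (lEquiv l'))
  collapse : ∀ e ∈ F, ∀ u ∈ G.ends e, ∀ v ∈ G.ends e, vMap u = vMap v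
  fiber_conn : ∀ u v : G.V, vMap u = vMap v → Relation.EqvGen (G.PAdj F) u v
  w_compat : ∀ v' : G'.V,
    G'.w v' = (∑ v ∈ Finset.univ.filter (fun v => vMap v = v'), G.w v)
      + (((F.filter fun e => ∀ u ∈ G.ends e, vMap u = v').card + 1)
          - (Finset.univ.filter fun v => vMap v = v').card)

namespace Contraction

variable {G G' : LGraph} (γ : Contraction G G')

/-- The induced map `γ^E_* : E_G → E_{G'}` (γ^E_*(e) = e if e ∉ F, 0 else). -/
def eStar : (G.E → ZMod 2) →ₗ[ZMod 2] (G'.E → ZMod 2) where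
  toFun x := fun e' => x (γ.eEquiv e').1
  map_add' _ _ := rfl
  map_smul' _ _ := rfl

/-- The induced map `γ^V_* : V_G → V_{G'}`. -/
def vStar : (G.V → ZMod 2) →ₗ[ZMod 2] (G'.V → ZMod 2) where
  toFun x := fun v' => ∑ v ∈ Finset.univ.filter (fun v => γ.vMap v = v'), x v
  map_add' x y := by
    funext v'
    simp [Finset.sum_add_distrib]
  map_smul' c x := by
    funext v'
    simp [Finset.mul_sum]

/-- The pushforward `γ_* P = P ∖ F` of a set of edges, as a subset of `E(G')`. -/
def pushE (P : Finset G.E) : Finset G'.E :=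
  Finset.univ.filter fun e' => (γ.eEquiv e' : {e : G.E // e ∉ γ.F}).1 ∈ P

/-- The graph of the induced map `γ̄ : V(G/P) → V(G'/P')` on components. -/
def compMapsTo (P : Finset G.E) (P' : Finset G'.E)
    (x : G.CompV P) (x' : G'.CompV P') : Prop :=
  ∃ v : G.V, Quot.mk (G.PAdj P) v = x ∧ Quot.mk (G'.PAdj P') (γ.vMap v) = x'

/-- The pushforward sign function: `s'(v') = Σ_{v ∈ γ̄⁻¹(v')} s(v)`. -/
def pushS (P : Finset G.E) (s : G.CompV P → ZMod 2) :
    G'.CompV (γ.pushE P) → ZMod 2 :=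
  fun x' => ∑ x ∈ Finset.univ.filter
    (fun x => γ.compMapsTo P (γ.pushE P) x x'), s x

/-- `γ_* σ = σ'` for spin structures. -/
def SpinMapsTo (σ : SpinStructure G) (σ' : SpinStructure G') : Prop :=
  σ'.P = γ.pushE σ.P ∧ HEq σ'.s (γ.pushS σ.P σ.s)

end Contraction

/-- An automorphism of a graph: weight-preserving bijection on vertices,
bijection on edges compatible with endpoints, fixing every leg. -/
structure GraphAut (G : LGraph) where
  vE : G.V ≃ G.V
  eE : G.E ≃ G.E
  ends_compat : ∀ e, G.ends (eE e) = (G.ends e).map vE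
  w_compat : ∀ v, G.w (vE v) = G.w v
  leg_fix : ∀ l, G.legEnd l = vE (G.legEnd l)

namespace GraphAut

variable {G : LGraph}

/-- Composition of automorphisms (`α.comp β` acts by `β` first, then `α`). -/
def comp (α β : GraphAut G) : GraphAut G where
  vE := β.vE.trans α.vE
  eE := β.eE.trans α.eE
  ends_compat e := by
    simp only [Equiv.trans_apply, Equiv.coe_trans]
    rw [α.ends_compat, β.ends_compat, Sym2.map_map]
  w_compat v := by
    simp only [Equiv.trans_apply]
    rw [α.w_compat, β.w_compat]
  leg_fix l := by
    simp only [Equiv.trans_apply]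
    rw [← β.leg_fix, ← α.leg_fix]

/-- `α_* σ = σ'` for an automorphism `α` and spin structures `σ, σ'`. -/
def SpinMapsTo (α : GraphAut G) (σ σ' : SpinStructure G) : Prop :=
  σ'.P = σ.P.image α.eE ∧
  ∀ v : G.V, σ'.s (Quot.mk (G.PAdj σ'.P) (α.vE v)) = σ.s (Quot.mk (G.PAdj σ.P) v)

/-- `α` preserves the spin structure `σ`, i.e. `α_*(P,s) = (P,s)`. -/
def PreservesSpin (α : GraphAut G) (σ : SpinStructure G) : Prop :=
  α.SpinMapsTo σ σ

end GraphAut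

/-- The graph `P̄ = G - R°` where `R = E ∖ P`: same vertices, edges `P`, and
the legs of `G` together with a pair of new legs for each edge of `R`, placed
at its two endpoints. -/
def LGraph.legify (G : LGraph) (P : Finset G.E) : LGraph where
  V := G.V
  E := {e : G.E // e ∈ P}
  Lg := G.Lg ⊕ ({e : G.E // e ∉ P} × Bool)
  fV := G.fV
  fE := inferInstance
  fL := inferInstance
  dV := G.dV
  dE := inferInstance
  dL := inferInstance
  neV := G.neV
  ends := fun e => G.ends e.1
  legEnd := fun l =>
    match l with
    | Sum.inl l => G.legEnd l
    | Sum.inr (e, b) => if b then (G.endPair e.1).1 else (G.endPair e.1).2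
  w := G.w

/-- `G` is a stable graph of genus `g` with `n` legs. -/
def StG (g n : ℕ) (G : LGraph) : Prop := G.Stable ∧ G.genus = g ∧ G.numLegs = n

/-- Objects of the poset `C_{g,n}` before taking isomorphism classes. -/
def CycObj : Type 1 := Σ G : LGraph, Finset G.E

/-- Objects of the poset `SP_{g,n}` before taking isomorphism classes. -/
def SpinObj : Type 1 := Σ G : LGraph, SpinStructure G

/-- Order on graphs: `G ≥ G'` iff there is a contraction `G → G'`. -/
def GraphGe (G G' : LGraph) : Prop := Nonempty (Contraction G G')

/-- Order on `C_{g,n}`: `(G,P) ≥ (G',P')` iff some contraction pushes `P` to `P'`. -/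
def CycGe (a b : CycObj) : Prop := ∃ γ : Contraction a.1 b.1, γ.pushE a.2 = b.2

/-- Order on `SP_{g,n}`: `(G,P,s) ≥ (G',P',s')` iff some contraction pushes
`(P,s)` to `(P',s')`. -/
def SpinGe (a b : SpinObj) : Prop := ∃ γ : Contraction a.1 b.1, γ.SpinMapsTo a.2 b.2

/-- `q : X → Y` is a quotient of posets (for the `≥`-relations `geA`, `geB`):
it is surjective, order-preserving, and any relation downstairs lifts. -/
def IsPosetQuotient {α : Sort*} {β : Sort*}
    (geA : α → α → Prop) (geB : β → β → Prop) (q : α → β) : Prop :=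
  Function.Surjective q ∧
  (∀ a a', geA a a' → geB (q a) (q a')) ∧
  (∀ b b', geB b b' → ∃ a a', q a = b ∧ q a' = b' ∧ geA a a')

/-- Strict order `x > y` associated to a `≥`-relation. -/
def StrictGt {α : Sort*} (ge : α → α → Prop) (x y : α) : Prop := ge x y ∧ ¬ ge y x

/-- `x` covers `y`. -/
def Covers {α : Sort*} (ge : α → α → Prop) (x y : α) : Prop :=
  StrictGt ge x y ∧ ¬ ∃ z, StrictGt ge x z ∧ StrictGt ge z y

/-- `ρ` is a rank function for the `≥`-relation `ge`. -/
def IsRankFn {α : Sort*} (ge : α → α → Prop) (ρ : α → ℕ) : Prop :=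
  (∀ x y, StrictGt ge x y → ρ y < ρ x) ∧
  (∀ x y, Covers ge x y → ρ x = ρ y + 1)

/-!
The cycle condition is pushed forward because the boundary maps commute with `γ`: a contracted
edge becomes a loop, which has zero boundary over `F₂`. The parity is preserved because `s'` is
a fibrewise sum of `s`. For the vanishing of `s'`, a vertex of `G'/γ_*P` of weight `0` is a
component of `(V(G), F ∪ P)` of genus `0`, and the components of `(V(G), P)` inside it have genus
`0` as well, by counting components as edges are added.
-/

namespace LGraph

variable (G : LGraph)

lemma mem_fiberV {S : Finset G.E} {x : G.CompV S} {v : G.V} :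
    v ∈ G.fiberV S x ↔ Quot.mk _ v = x := by
  simp [fiberV]

lemma mem_fiberE {S : Finset G.E} {x : G.CompV S} {e : G.E} :
    e ∈ G.fiberE S x ↔ e ∈ S ∧ ∀ v ∈ G.ends e, Quot.mk _ v = x :=
  Finset.mem_filter

lemma pAdj_mono {S T : Finset G.E} (hST : S ⊆ T) : G.PAdj S ≤ G.PAdj T :=
  fun _ _ ⟨e, he, hu, hv⟩ => ⟨e, hST he, hu, hv⟩

lemma mk_eq_mk_of_subset {S T : Finset G.E} (hST : S ⊆ T) {u v : G.V}
    (h : Quot.mk (G.PAdj S) u = Quot.mk _ v) : Quot.mk (G.PAdj T) u = Quot.mk _ v :=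
  Quot.eqvGen_sound (Relation.EqvGen.mono (G.pAdj_mono hST) _ _ (Quot.eqvGen_exact h))

lemma ends_eq_endPair (e : G.E) : G.ends e = s((G.endPair e).1, (G.endPair e).2) :=
  (Classical.choose_spec (Quot.exists_rep (G.ends e))).symm

/-- Merging the class of one endpoint of `e` into that of the other descends to a map
`G/(S ∪ {e}) → G/S` whose image misses at most one class. -/
lemma card_compV_le_card_compV_insert_add_one (S : Finset G.E) (e : G.E) :
    Fintype.card (G.CompV S) ≤ Fintype.card (G.CompV (insert e S)) + 1 := by
  obtain ⟨a, b, hab⟩ : ∃ a b, G.ends e = s(a, b) := ⟨_, _, G.ends_eq_endPair e⟩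
  let merge (y : G.CompV S) : G.CompV S := if y = Quot.mk _ b then Quot.mk _ a else y
  have hmerge : ∀ u v, G.PAdj (insert e S) u v → merge (Quot.mk _ u) = merge (Quot.mk _ v) := by
    rintro u v ⟨e', he', hu, hv⟩
    rcases Finset.mem_insert.1 he' with rfl | he'
    · have hends : ∀ w ∈ G.ends e', merge (Quot.mk _ w) = Quot.mk _ a := by
        intro w hw
        rw [hab, Sym2.mem_iff] at hw
        rcases hw with rfl | rfl
        · exact ite_self _
        · exact if_pos rfl
      rw [hends u hu, hends v hv]
    · rw [Quot.sound ⟨e', he', hu, hv⟩]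
  let unmerge (x : G.CompV (insert e S)) : G.CompV S :=
    Quot.lift (fun v => merge (Quot.mk _ v)) hmerge x
  have himage :
      (Finset.univ : Finset (G.CompV S)).erase (Quot.mk _ b) ⊆ Finset.univ.image unmerge := by
    rintro ⟨v⟩ hv
    exact Finset.mem_image.2
      ⟨Quot.mk _ v, Finset.mem_univ _, if_neg (Finset.ne_of_mem_erase hv)⟩
  have h₁ := Finset.pred_card_le_card_erase (s := (Finset.univ : Finset (G.CompV S)))
    (a := Quot.mk _ b)
  have h₂ := Finset.card_le_card himage
  have h₃ := Finset.card_image_le (s := Finset.univ) (f := unmerge)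
  simp only [Finset.card_univ] at h₁ h₃
  omega

lemma card_compV_add_card_le_of_subset {S T : Finset G.E} (hST : S ⊆ T) :
    Fintype.card (G.CompV S) + S.card ≤ Fintype.card (G.CompV T) + T.card := by
  suffices ∀ D : Finset G.E,
      Fintype.card (G.CompV S) + S.card ≤ Fintype.card (G.CompV (S ∪ D)) + (S ∪ D).card by
    simpa [Finset.union_eq_right.2 hST] using this T
  intro D
  induction D using Finset.induction_on with
  | empty => simp
  | insert e D _ ih =>
    rw [Finset.union_insert]
    by_cases he : e ∈ S ∪ D
    · rwa [Finset.insert_eq_of_mem he]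
    · have := G.card_compV_le_card_compV_insert_add_one (S ∪ D) e
      rw [Finset.card_insert_of_notMem he]
      omega

/-- Vertices outside `U` are isolated in `(V, S)`. -/
lemma card_add_one_le_card_compV_add_card {S : Finset G.E} {U : Finset G.V}
    (hS : ∀ e ∈ S, ∀ u ∈ G.ends e, u ∈ U) {u₀ : G.V} (hu₀ : u₀ ∈ U) :
    Fintype.card G.V + 1 ≤ Fintype.card (G.CompV S) + U.card := by
  let f (v : G.V) : Option {v : G.V // v ∉ U} := if hv : v ∈ U then none else some ⟨v, hv⟩
  have hf : ∀ u v, G.PAdj S u v → f u = f v := by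
    rintro u v ⟨e, he, hu, hv⟩
    simp [f, hS e he u hu, hS e he v hv]
  have hsurj : Function.Surjective fun x : G.CompV S => Quot.lift f hf x := by
    rintro (_ | ⟨v, hv⟩)
    · exact ⟨Quot.mk _ u₀, by simp [f, hu₀]⟩
    · exact ⟨Quot.mk _ v, by simp [f, hv]⟩
  have := Fintype.card_le_of_surjective _ hsurj
  rw [Fintype.card_option, Fintype.card_subtype_compl, Fintype.card_coe] at this
  have := U.card_le_univ
  omega

lemma card_compV_add_card_le_card_add_one {T : Finset G.E} {W : Finset G.V} (w₀ : G.V)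
    (hW : ∀ v ∈ W, Quot.mk (G.PAdj T) v = Quot.mk _ w₀) :
    Fintype.card (G.CompV T) + W.card ≤ Fintype.card G.V + 1 := by
  let f : Option {v : G.V // v ∉ W} → G.CompV T :=
    fun o => o.elim (Quot.mk _ w₀) (fun v => Quot.mk _ v.1)
  have hsurj : Function.Surjective f := by
    rintro ⟨v⟩
    by_cases hv : v ∈ W
    · exact ⟨none, (hW v hv).symm⟩
    · exact ⟨some ⟨v, hv⟩, rfl⟩
  have := Fintype.card_le_of_surjective _ hsurj
  rw [Fintype.card_option, Fintype.card_subtype_compl, Fintype.card_coe] at this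
  have := W.card_le_univ
  omega

lemma eqvGen_pAdj_fiberE {S : Finset G.E} {u v : G.V} (h : Relation.EqvGen (G.PAdj S) u v) :
    Relation.EqvGen (G.PAdj (G.fiberE S (Quot.mk _ u))) u v := by
  induction h with
  | rel u v huv =>
    obtain ⟨e, he, hu, hv⟩ := huv
    exact .rel _ _
      ⟨e, G.mem_fiberE.2 ⟨he, fun w hw => Quot.sound ⟨e, he, hw, hu⟩⟩, hu, hv⟩
  | refl u => exact .refl u
  | symm u v huv ih =>
    have huv : (Quot.mk _ v : G.CompV S) = Quot.mk _ u := (Quot.eqvGen_sound huv).symm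
    rw [huv]
    exact ih.symm
  | trans u v w huv _ ih₁ ih₂ =>
    have huv : (Quot.mk _ v : G.CompV S) = Quot.mk _ u := (Quot.eqvGen_sound huv).symm
    rw [huv] at ih₂
    exact ih₁.trans _ _ _ ih₂

lemma quotWeight_eq_zero_iff (S : Finset G.E) (x : G.CompV S) :
    G.quotWeight S x = 0 ↔
      (∀ v ∈ G.fiberV S x, G.w v = 0) ∧ (G.fiberE S x).card + 1 ≤ (G.fiberV S x).card := by
  rw [quotWeight, Nat.add_eq_zero_iff, Finset.sum_eq_zero_iff, Nat.sub_eq_zero_iff_le]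

/-- Write `U ⊆ W` for the two components of `a`, `E_U ⊆ E_W` for their edge sets and `c` for the
number of components. Then
`|V| - |U| + 1 + |E_U| ≤ c(E_U) + |E_U| ≤ c(E_W) + |E_W| ≤ |V| - |W| + 1 + |E_W| ≤ |V|`. -/
lemma quotWeight_eq_zero_of_subset {S T : Finset G.E} (hST : S ⊆ T) (a : G.V)
    (h : G.quotWeight T (Quot.mk _ a) = 0) : G.quotWeight S (Quot.mk _ a) = 0 := by
  obtain ⟨hw, hcard⟩ := (G.quotWeight_eq_zero_iff _ _).1 h
  refine (G.quotWeight_eq_zero_iff _ _).2 ?_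
  have hV : G.fiberV S (Quot.mk _ a) ⊆ G.fiberV T (Quot.mk _ a) := fun v hv =>
    G.mem_fiberV.2 (G.mk_eq_mk_of_subset hST (G.mem_fiberV.1 hv))
  have hE : G.fiberE S (Quot.mk _ a) ⊆ G.fiberE T (Quot.mk _ a) := fun e he =>
    have he := G.mem_fiberE.1 he
    G.mem_fiberE.2 ⟨hST he.1, fun v hv => G.mk_eq_mk_of_subset hST (he.2 v hv)⟩
  refine ⟨fun v hv => hw v (hV hv), ?_⟩
  have h₁ := G.card_compV_add_card_le_of_subset hE
  have h₂ := G.card_add_one_le_card_compV_add_card (U := G.fiberV S (Quot.mk _ a))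
    (fun e he u hu => G.mem_fiberV.2 ((G.mem_fiberE.1 he).2 u hu)) (G.mem_fiberV.2 rfl)
  have h₃ := G.card_compV_add_card_le_card_add_one (T := G.fiberE T (Quot.mk _ a))
    (W := G.fiberV T (Quot.mk _ a)) a fun v hv =>
      (Quot.eqvGen_sound (G.eqvGen_pAdj_fiberE (Quot.eqvGen_exact (G.mem_fiberV.1 hv).symm))).symm
  omega

end LGraph

namespace Contraction

variable {G G' : LGraph} (γ : Contraction G G')

def fiberV (v' : G'.V) : Finset G.V := Finset.univ.filter fun v => γ.vMap v = v'

def fiberE (v' : G'.V) : Finset G.E := γ.F.filter fun e => ∀ u ∈ G.ends e, γ.vMap u = v'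

lemma w_eq_zero_iff (v' : G'.V) :
    G'.w v' = 0 ↔
      (∀ v ∈ γ.fiberV v', G.w v = 0) ∧ (γ.fiberE v').card + 1 ≤ (γ.fiberV v').card := by
  rw [γ.w_compat, Nat.add_eq_zero_iff, Finset.sum_eq_zero_iff, Nat.sub_eq_zero_iff_le]
  rfl

lemma mem_pushE {P : Finset G.E} {e' : G'.E} : e' ∈ γ.pushE P ↔ (γ.eEquiv e').1 ∈ P := by
  simp [pushE]

lemma sum_degMul_fiberV {e : G.E} {a b : G.V} (hab : G.ends e = s(a, b)) (v' : G'.V) :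
    ∑ v ∈ γ.fiberV v', G.degMul v e =
      (if γ.vMap a = v' then 1 else 0) + (if γ.vMap b = v' then 1 else 0) := by
  simp only [LGraph.degMul, hab, Sym2.lift_mk, Finset.sum_add_distrib, fiberV]
  rw [Finset.sum_ite_eq, Finset.sum_ite_eq]
  simp

lemma sum_degMul_fiberV_eEquiv (e' : G'.E) (v' : G'.V) :
    ∑ v ∈ γ.fiberV v', G.degMul v (γ.eEquiv e') = G'.degMul v' e' := by
  obtain ⟨a, b, hab⟩ : ∃ a b, G.ends (γ.eEquiv e') = s(a, b) :=
    ⟨_, _, G.ends_eq_endPair _⟩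
  rw [γ.sum_degMul_fiberV hab, LGraph.degMul, γ.ends_compat, hab, Sym2.map_mk,
    Sym2.lift_mk]

/-- A contracted edge becomes a loop, which meets every vertex an even number of times. -/
lemma sum_degMul_fiberV_of_mem_F {e : G.E} (he : e ∈ γ.F) (v' : G'.V) :
    ((∑ v ∈ γ.fiberV v', G.degMul v e : ℕ) : ZMod 2) = 0 := by
  obtain ⟨a, b, hab⟩ : ∃ a b, G.ends e = s(a, b) := ⟨_, _, G.ends_eq_endPair _⟩
  have hba : γ.vMap b = γ.vMap a :=
    γ.collapse e he b (hab ▸ Sym2.mem_mk_right a b) a (hab ▸ Sym2.mem_mk_left a b)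
  rw [γ.sum_degMul_fiberV hab, hba]
  split_ifs <;> decide

lemma boundary_eStar (x : G.E → ZMod 2) :
    G'.boundary (γ.eStar x) = γ.vStar (G.boundary x) := by
  funext v'
  let term (e : G.E) : ZMod 2 := x e * ((∑ v ∈ γ.fiberV v', G.degMul v e : ℕ) : ZMod 2)
  calc ∑ e', x (γ.eEquiv e') * (G'.degMul v' e' : ZMod 2)
      = ∑ e : {e // e ∉ γ.F}, term e := by
        rw [← γ.eEquiv.sum_comp]
        simp only [term, sum_degMul_fiberV_eEquiv]
    _ = ∑ e, term e := by
        rw [← Fintype.sum_subtype_add_sum_subtype (· ∈ γ.F) term, right_eq_add]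
        exact Finset.sum_eq_zero fun e _ => by
          simp only [term, γ.sum_degMul_fiberV_of_mem_F e.2, mul_zero]
    _ = ∑ v ∈ γ.fiberV v', ∑ e, x e * (G.degMul v e : ZMod 2) := by
        simp only [term, Nat.cast_sum, Finset.mul_sum]
        exact Finset.sum_comm

lemma indicator_pushE (P : Finset G.E) :
    G'.indicator (γ.pushE P) = γ.eStar (G.indicator P) := by
  funext e'
  simp [LGraph.indicator, eStar, mem_pushE]

lemma isCyclic_pushE {P : Finset G.E} (hP : G.IsCyclic P) : G'.IsCyclic (γ.pushE P) := by
  rw [LGraph.IsCyclic, indicator_pushE, boundary_eStar, hP, map_zero]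

section

variable (P : Finset G.E)

lemma mk_vMap_eq_of_pAdj_union {u v : G.V} (h : G.PAdj (γ.F ∪ P) u v) :
    Quot.mk (G'.PAdj (γ.pushE P)) (γ.vMap u) = Quot.mk _ (γ.vMap v) := by
  obtain ⟨e, he, hu, hv⟩ := h
  by_cases hF : e ∈ γ.F
  · rw [γ.collapse e hF u hu v hv]
  · have heP : e ∈ P := (Finset.mem_union.1 he).resolve_left hF
    have hends := γ.ends_compat (γ.eEquiv.symm ⟨e, hF⟩)
    rw [Equiv.apply_symm_apply] at hends
    refine Quot.sound ⟨γ.eEquiv.symm ⟨e, hF⟩, by simpa [mem_pushE] using heP, ?_, ?_⟩ <;>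
      rw [hends] <;> exact Sym2.mem_map.2 ⟨_, ‹_›, rfl⟩

/-- The inverse map sends a vertex of `G'` to the component of any of its preimages; this is well
defined because the fibres of `γ` are `F`-connected. -/
lemma mk_vMap_eq_iff {u v : G.V} :
    Quot.mk (G'.PAdj (γ.pushE P)) (γ.vMap u) = Quot.mk _ (γ.vMap v) ↔
      Quot.mk (G.PAdj (γ.F ∪ P)) u = Quot.mk _ v := by
  constructor
  · let lift (v' : G'.V) : G.CompV (γ.F ∪ P) := Quot.mk _ (Function.surjInv γ.vSurj v')
    have hlift (u : G.V) : lift (γ.vMap u) = Quot.mk _ u :=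
      G.mk_eq_mk_of_subset Finset.subset_union_left
        (Quot.eqvGen_sound (γ.fiber_conn _ _ (Function.surjInv_eq γ.vSurj _)))
    have hresp : ∀ u' v', G'.PAdj (γ.pushE P) u' v' → lift u' = lift v' := by
      rintro u' v' ⟨e', he', hu', hv'⟩
      rw [γ.ends_compat] at hu' hv'
      obtain ⟨u, hu, rfl⟩ := Sym2.mem_map.1 hu'
      obtain ⟨v, hv, rfl⟩ := Sym2.mem_map.1 hv'
      rw [hlift, hlift]
      exact Quot.sound ⟨_, Finset.mem_union_right _ ((γ.mem_pushE).1 he'), hu, hv⟩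
    exact fun h => (hlift u).symm.trans ((congrArg (Quot.lift lift hresp) h).trans (hlift v))
  · intro h
    exact congrArg (Quot.lift (fun v => Quot.mk (G'.PAdj (γ.pushE P)) (γ.vMap v))
      fun _ _ => γ.mk_vMap_eq_of_pAdj_union P) h

/-- The induced contraction `γ̄ : G/P → G'/γ_*P` on vertices. -/
def compMap : G.CompV P → G'.CompV (γ.pushE P) :=
  Quot.lift (fun v => Quot.mk _ (γ.vMap v)) fun _ _ h =>
    γ.mk_vMap_eq_of_pAdj_union P (G.pAdj_mono Finset.subset_union_right _ _ h)

lemma compMapsTo_iff (x : G.CompV P) (x' : G'.CompV (γ.pushE P)) :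
    γ.compMapsTo P (γ.pushE P) x x' ↔ γ.compMap P x = x' := by
  constructor
  · rintro ⟨v, rfl, rfl⟩
    rfl
  · rintro rfl
    obtain ⟨v, rfl⟩ := Quot.exists_rep x
    exact ⟨v, rfl, rfl⟩

lemma sum_pushS (s : G.CompV P → ZMod 2) :
    ∑ x', γ.pushS P s x' = ∑ x, s x := by
  simp only [pushS, compMapsTo_iff]
  exact Finset.sum_fiberwise _ _ _

lemma card_fiberV_union (a : G.V) :
    (G.fiberV (γ.F ∪ P) (Quot.mk _ a)).card =
      ∑ v' ∈ G'.fiberV (γ.pushE P) (Quot.mk _ (γ.vMap a)), (γ.fiberV v').card := by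
  simp only [fiberV]
  rw [Finset.sum_card_fiberwise_eq_card_filter]
  congr 1
  ext v
  simp only [Finset.mem_filter, Finset.mem_univ, true_and]
  exact G.mem_fiberV.trans ((γ.mk_vMap_eq_iff P).symm.trans G'.mem_fiberV.symm)

lemma card_fiberE_union_le (a : G.V) :
    (G.fiberE (γ.F ∪ P) (Quot.mk _ a)).card ≤
      ∑ v' ∈ G'.fiberV (γ.pushE P) (Quot.mk _ (γ.vMap a)), (γ.fiberE v').card +
        (G'.fiberE (γ.pushE P) (Quot.mk _ (γ.vMap a))).card := by
  have hsub : G.fiberE (γ.F ∪ P) (Quot.mk _ a) ⊆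
      (G'.fiberV (γ.pushE P) (Quot.mk _ (γ.vMap a))).biUnion γ.fiberE ∪
        (G'.fiberE (γ.pushE P) (Quot.mk _ (γ.vMap a))).image fun e' => (γ.eEquiv e').1 := by
    intro e he
    obtain ⟨he, hends⟩ := G.mem_fiberE.1 he
    have hends' : ∀ u ∈ G.ends e,
        Quot.mk (G'.PAdj (γ.pushE P)) (γ.vMap u) = Quot.mk _ (γ.vMap a) :=
      fun u hu => (γ.mk_vMap_eq_iff P).2 (hends u hu)
    have hu₀ : (G.endPair e).1 ∈ G.ends e := by
      rw [G.ends_eq_endPair e]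
      exact Sym2.mem_mk_left _ _
    by_cases hF : e ∈ γ.F
    · refine Finset.mem_union_left _ (Finset.mem_biUnion.2 ⟨γ.vMap (G.endPair e).1, ?_, ?_⟩)
      · exact G'.mem_fiberV.2 (hends' _ hu₀)
      · exact Finset.mem_filter.2 ⟨hF, fun u hu => γ.collapse e hF u hu _ hu₀⟩
    · refine Finset.mem_union_right _
        (Finset.mem_image.2 ⟨γ.eEquiv.symm ⟨e, hF⟩, ?_, by simp⟩)
      refine G'.mem_fiberE.2 ⟨?_, fun u' hu' => ?_⟩
      · simpa [mem_pushE] using (Finset.mem_union.1 he).resolve_left hF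
      · rw [γ.ends_compat, Equiv.apply_symm_apply] at hu'
        obtain ⟨u, hu, rfl⟩ := Sym2.mem_map.1 hu'
        exact hends' u hu
  calc _ ≤ _ := Finset.card_le_card hsub
    _ ≤ _ := Finset.card_union_le _ _
    _ ≤ _ := add_le_add Finset.card_biUnion_le Finset.card_image_le

/-- The component of `a` in `(V(G), F ∪ P)` is glued from the fibres of `γ` over the component of
`γ a` in `(V(G'), γ_*P)`; if the latter and all these fibres are trees of weight `0`, so is the
glued graph. -/
lemma quotWeight_union_eq_zero {a : G.V}
    (h : G'.quotWeight (γ.pushE P) (Quot.mk _ (γ.vMap a)) = 0) :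
    G.quotWeight (γ.F ∪ P) (Quot.mk _ a) = 0 := by
  obtain ⟨hw', hcard'⟩ := (G'.quotWeight_eq_zero_iff _ _).1 h
  have hfib := fun v' hv' => (γ.w_eq_zero_iff v').1 (hw' v' hv')
  refine (G.quotWeight_eq_zero_iff _ _).2 ⟨fun v hv => ?_, ?_⟩
  · have hv' : γ.vMap v ∈ G'.fiberV (γ.pushE P) (Quot.mk _ (γ.vMap a)) :=
      G'.mem_fiberV.2 ((γ.mk_vMap_eq_iff P).2 (G.mem_fiberV.1 hv))
    exact (hfib _ hv').1 v (Finset.mem_filter.2 ⟨Finset.mem_univ _, rfl⟩)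
  · calc _ ≤ ∑ v' ∈ G'.fiberV (γ.pushE P) (Quot.mk _ (γ.vMap a)), (γ.fiberE v').card +
            (G'.fiberE (γ.pushE P) (Quot.mk _ (γ.vMap a))).card + 1 :=
          Nat.add_le_add_right (γ.card_fiberE_union_le P a) 1
      _ ≤ ∑ v' ∈ G'.fiberV (γ.pushE P) (Quot.mk _ (γ.vMap a)),
            ((γ.fiberE v').card + 1) := by
          rw [Finset.sum_add_distrib, Finset.sum_const, smul_eq_mul, mul_one]
          omega
      _ ≤ _ := by
          rw [card_fiberV_union]
          exact Finset.sum_le_sum fun v' hv' => (hfib v' hv').2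

lemma quotWeight_eq_zero_of_quotWeight_vMap_eq_zero {a : G.V}
    (h : G'.quotWeight (γ.pushE P) (Quot.mk _ (γ.vMap a)) = 0) :
    G.quotWeight P (Quot.mk _ a) = 0 :=
  G.quotWeight_eq_zero_of_subset Finset.subset_union_right a (γ.quotWeight_union_eq_zero P h)

end

end Contraction

/-- Let `γ : G → G'` be a contraction and `(P,s)` a spin
structure on `G`.  Then `(P', s') = γ_*(P,s)` (where `P' = γ_* P` and
`s'(v') = Σ_{v ∈ γ̄⁻¹(v')} s(v)`) is a spin structure on `G'` — in particular
`P'` is cyclic and `s'` vanishes on weight-`0` vertices of `G'/P'` — and it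
has the same parity as `(P,s)`. -/
theorem spin_pushforward_is_spin_and_preserves_parity (G G' : LGraph)
    (γ : Contraction G G') (P : Finset G.E) (hP : G.IsCyclic P)
    (s : G.CompV P → ZMod 2)
    (hs : ∀ x, G.quotWeight P x = 0 → s x = 0) :
    G'.IsCyclic (γ.pushE P) ∧
    (∀ x' : G'.CompV (γ.pushE P),
      G'.quotWeight (γ.pushE P) x' = 0 → γ.pushS P s x' = 0) ∧
    (∑ x' : G'.CompV (γ.pushE P), γ.pushS P s x') = ∑ x : G.CompV P, s x := by
  refine ⟨γ.isCyclic_pushE hP, fun x' hx' => Finset.sum_eq_zero fun x hx => ?_,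
    γ.sum_pushS P s⟩
  obtain ⟨a, rfl, rfl⟩ := (Finset.mem_filter.1 hx).2
  exact hs _ (γ.quotWeight_eq_zero_of_quotWeight_vMap_eq_zero P hx')

end
end

section
/- Let G be a basic stable graph of genus g ≥ 2 and v ∈ V(G) any vertex. Then 2 ≤ deg(v) ≤ 4, and if deg(v) = 4 then w(v) = 0 and ℓ(v) = 0. Moreover g(v) := loop(v) + w(v) ≤ 2, with g(v) = 2 only if |V(G)| = 1; and if |V(G)| = 1 then g = 2. -/
/-!
Common combinatorial preliminaries: weighted graphs with legs, contractions,
spin structures, following Caporaso–Melo–Pacini, "Tropicalizing the moduli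
space of spin curves".
-/

attribute [local instance] Classical.propDecidable

noncomputable section

/-!
Everything is read off from the identity `deg v = 2·loop(v) + #(non-loop half-edges at v)`
together with the bounds `w(v) ≤ 1`, `w(v) + deg(v) + ℓ(v) ≤ 4` and the evenness of `deg v`.
A vertex meeting only loops is, by connectedness, the only vertex; on a one-vertex graph every
edge is a loop, so `b₁ = |E|`, `deg v = 2|E|`, and `2 ≤ w(v) + |E|`, `w(v) + 2|E| ≤ 4` force
genus `2`.
-/

lemma Sym2.mem_diag_iff {α : Type*} {a b : α} : a ∈ Sym2.diag b ↔ a = b := by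
  simp [Sym2.diag]

namespace LGraph

variable {G : LGraph}

lemma exists_ends_eq (e : G.E) : ∃ a b : G.V, G.ends e = s(a, b) := by
  obtain ⟨⟨a, b⟩, hab⟩ := Quot.exists_rep (G.ends e)
  exact ⟨a, b, hab.symm⟩

lemma degMul_of_ends_eq {a b : G.V} {e : G.E} (h : G.ends e = s(a, b)) (v : G.V) :
    G.degMul v e = (if a = v then 1 else 0) + (if b = v then 1 else 0) := by
  simp [degMul, h]

lemma degMul_of_ends_eq_diag {v : G.V} {e : G.E} (h : G.ends e = Sym2.diag v) :
    G.degMul v e = 2 := by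
  simp [G.degMul_of_ends_eq (show G.ends e = s(v, v) from h)]

lemma degMul_pos_iff {v : G.V} {e : G.E} : 0 < G.degMul v e ↔ v ∈ G.ends e := by
  obtain ⟨a, b, hab⟩ := G.exists_ends_eq e
  rw [G.degMul_of_ends_eq hab, hab, Sym2.mem_iff]
  split_ifs <;> grind

lemma deg_eq_zero_iff {v : G.V} : G.deg v = 0 ↔ ∀ e, v ∉ G.ends e := by
  simp [deg, Finset.sum_eq_zero_iff, ← degMul_pos_iff]

lemma sum_degMul_loops (v : G.V) :
    ∑ e ∈ Finset.univ.filter (fun e => G.ends e = Sym2.diag v), G.degMul v e = 2 * G.loops v := by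
  rw [Finset.sum_congr rfl fun e he => degMul_of_ends_eq_diag (Finset.mem_filter.mp he).2]
  simp [loops, mul_comm]

lemma two_mul_loops_le_deg (v : G.V) : 2 * G.loops v ≤ G.deg v :=
  G.sum_degMul_loops v ▸ Finset.sum_le_sum_of_subset (Finset.filter_subset _ _)

lemma two_mul_loops_lt_deg {v : G.V} {e : G.E} (he : v ∈ G.ends e)
    (hne : G.ends e ≠ Sym2.diag v) : 2 * G.loops v < G.deg v := by
  have he_notMem : e ∉ Finset.univ.filter (fun e => G.ends e = Sym2.diag v) := by simp [hne]
  calc 2 * G.loops v < G.degMul v e + 2 * G.loops v := by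
        have := degMul_pos_iff.mpr he
        omega
    _ = ∑ f ∈ insert e (Finset.univ.filter fun e => G.ends e = Sym2.diag v), G.degMul v f := by
        rw [Finset.sum_insert he_notMem, sum_degMul_loops]
    _ ≤ G.deg v := Finset.sum_le_sum_of_subset (Finset.subset_univ _)

lemma Eulerian.two_dvd_deg (heul : G.Eulerian) (v : G.V) : 2 ∣ G.deg v := by
  have h := congrFun heul v
  simp only [boundary, indicator, LinearMap.coe_mk, AddHom.coe_mk,
    Finset.mem_univ, if_true, one_mul, Pi.zero_apply, ← Nat.cast_sum] at h
  exact (ZMod.natCast_eq_zero_iff _ 2).mp h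

lemma Connected.card_eq_one_of_forall_ends_eq_diag (hconn : G.Connected) {v : G.V}
    (hv : ∀ e, v ∈ G.ends e → G.ends e = Sym2.diag v) : Fintype.card G.V = 1 := by
  have step : ∀ {a b : G.V}, G.PAdj Finset.univ a b → (a = v ↔ b = v) := by
    rintro a b ⟨e, -, ha, hb⟩
    have mem_eq : ∀ z ∈ G.ends e, G.ends e = Sym2.diag v → z = v := fun z hz hd => by
      rw [hd] at hz
      exact Sym2.mem_diag_iff.mp hz
    constructor
    · rintro rfl
      exact mem_eq b hb (hv e ha)
    · rintro rfl
      exact mem_eq a ha (hv e hb)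
  have closed : ∀ {a b : G.V}, Relation.EqvGen (G.PAdj Finset.univ) a b → (a = v ↔ b = v) := by
    intro a b h
    induction h with
    | rel _ _ hab => exact step hab
    | refl => exact Iff.rfl
    | symm _ _ _ ih => exact ih.symm
    | trans _ _ _ _ _ ih₁ ih₂ => exact ih₁.trans ih₂
  exact Fintype.card_eq_one_iff.mpr ⟨v, fun u => (closed (hconn u v)).mpr rfl⟩

lemma ends_eq_diag_of_card_eq_one (hV : Fintype.card G.V = 1) (e : G.E) (v : G.V) :
    G.ends e = Sym2.diag v := by
  obtain ⟨a, b, hab⟩ := G.exists_ends_eq e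
  have := Fintype.card_le_one_iff.mp hV.le
  rw [hab, this a v, this b v]
  rfl

lemma Connected.two_le_deg (hconn : G.Connected) (heul : G.Eulerian) [Nonempty G.E]
    (v : G.V) : 2 ≤ G.deg v := by
  suffices G.deg v ≠ 0 by have := heul.two_dvd_deg v; omega
  intro h0
  have hnot := deg_eq_zero_iff.mp h0
  have hV := hconn.card_eq_one_of_forall_ends_eq_diag fun e he => absurd he (hnot e)
  obtain ⟨e⟩ := ‹Nonempty G.E›
  exact hnot e (ends_eq_diag_of_card_eq_one hV e v ▸ Sym2.mem_diag_iff.mpr rfl)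

lemma deg_eq_two_mul_card_of_card_eq_one (hV : Fintype.card G.V = 1) (v : G.V) :
    G.deg v = 2 * Fintype.card G.E := by
  simp [deg, degMul_of_ends_eq_diag (ends_eq_diag_of_card_eq_one hV _ v), mul_comm]

lemma Connected.numComp_eq_one (hconn : G.Connected) : G.numComp = 1 := by
  refine Nat.card_eq_one_iff_unique.mpr ⟨⟨fun x y => ?_⟩, inferInstance⟩
  induction x using Quot.ind with | _ a =>
  induction y using Quot.ind with | _ b =>
  exact Quot.eqvGen_sound (hconn a b)

lemma Connected.genus_eq_of_card_eq_one (hconn : G.Connected) (hV : Fintype.card G.V = 1)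
    (v : G.V) : G.genus = G.w v + Fintype.card G.E := by
  have hsum : ∑ u, G.w u = G.w v := by
    rw [Fintype.sum_eq_single v fun u hu => absurd (Fintype.card_le_one_iff.mp hV.le u v) hu]
  rw [genus, b1, hconn.numComp_eq_one, hV, hsum, Nat.add_sub_cancel]

lemma IsBasic.genus_eq_two_of_card_eq_one (hb : G.IsBasic) (hV : Fintype.card G.V = 1) :
    G.genus = 2 := by
  obtain ⟨⟨hconn, -⟩, hg2, hE, -, hw1, hle4, -⟩ := hb
  obtain ⟨v⟩ := G.neV
  have h4 := hle4 v
  have hw := hw1 v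
  have hEpos : 0 < Fintype.card G.E := Fintype.card_pos
  rw [hconn.genus_eq_of_card_eq_one hV v] at hg2 ⊢
  rw [deg_eq_two_mul_card_of_card_eq_one hV v] at h4
  omega

lemma IsBasic.card_eq_one_of_loops_add_w_eq_two (hb : G.IsBasic) {v : G.V}
    (h2 : G.loops v + G.w v = 2) : Fintype.card G.V = 1 := by
  obtain ⟨⟨hconn, -⟩, -, -, heul, hw1, hle4, -⟩ := hb
  refine hconn.card_eq_one_of_forall_ends_eq_diag (v := v) fun e he => ?_
  by_contra hne
  have hlt := two_mul_loops_lt_deg he hne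
  have := heul.two_dvd_deg v
  have := hle4 v
  have := hw1 v
  omega

end LGraph

/-- Let `G` be a basic stable graph of genus `g ≥ 2` and
`v` any vertex.  Then `2 ≤ deg(v) ≤ 4`; if `deg(v) = 4` then `w(v) = 0` and
`ℓ(v) = 0`.  Moreover `g(v) = loop(v) + w(v) ≤ 2`, with `g(v) = 2` only if
`|V(G)| = 1`; and if `|V(G)| = 1` then `g = 2`. -/
theorem basic_graph_vertex_facts (G : LGraph) (g : ℕ)
    (hgen : G.genus = g) (hb : G.IsBasic) :
    (∀ v : G.V,
      2 ≤ G.deg v ∧ G.deg v ≤ 4 ∧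
      (G.deg v = 4 → G.w v = 0 ∧ G.legsAt v = 0) ∧
      G.loops v + G.w v ≤ 2 ∧
      (G.loops v + G.w v = 2 → Fintype.card G.V = 1)) ∧
    (Fintype.card G.V = 1 → g = 2) := by
  obtain ⟨⟨hconn, -⟩, -, hE, heul, hw1, hle4, -⟩ := id hb
  refine ⟨fun v => ?_, fun hV => hgen ▸ hb.genus_eq_two_of_card_eq_one hV⟩
  have hdeg := hconn.two_le_deg heul v
  have heven := heul.two_dvd_deg v
  have hloops := G.two_mul_loops_le_deg v
  have h4 := hle4 v
  have hw := hw1 v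
  exact ⟨hdeg, by omega, fun _ => by omega, by omega, hb.card_eq_one_of_loops_add_w_eq_two⟩
end
end
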